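/- Let n ≥ 2 and let (L_i)_{i≥0} be the Markov chain on the integers {0, 1, …, n} with L₀ = 0 and, for each i ≥ 1, conditionally on L_{i−1}: L_i = L_{i−1} − 1 with probability L_{i−1}/n and L_i = L_{i−1} + 1 with probability 1 − L_{i−1}/n. Then for all sufficiently large n, the probability that there exists an integer ℓ with n/4 ≤ ℓ ≤ n² and L_{2ℓ} = 0 is at most n^{−4}. -/

import Mathlib

open scoped Classical
open Filter

noncomputable section

/-- Uniform (counting) probability of an event on a finite sample space. -/
def prob {Ω : Type*} [Finite Ω] (p : Ω → Prop) : ℝ :=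
  (Nat.card {ω : Ω // p ω} : ℝ) / (Nat.card Ω : ℝ)

/-- The biased random walk `(L_i)` on `{0, 1, …, n}` with `L₀ = 0`, realized from a
family `ω` of i.i.d. uniform random variables on `{0, …, n−1}`: at step `i+1` the
walk decreases by `1` if `ω i < L_i` — which, conditionally on `L_i`, happens with
probability `L_i / n` — and otherwise increases by `1`.  (Only the first `2n²` steps
are ever used below, so the drivers are indexed by `Fin (2·n²)`.) -/
def walk (n : ℕ) (ω : Fin (2 * n ^ 2) → Fin n) : ℕ → ℕ
  | 0 => 0
  | i + 1 =>
      if h : i < 2 * n ^ 2 then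
        if (ω ⟨i, h⟩ : ℕ) < walk n ω i then walk n ω i - 1 else walk n ω i + 1
      else walk n ω i

/-!
Let `k = ⌊n/16⌋`. If `L_{2ℓ} = 0` with `2ℓ ≥ n/2 ≥ 2k`, then `L_i ≤ 2ℓ - i ≤ 2k` during the last
`2k` steps before time `2ℓ`, and at least half of these steps go down. A down-step at time `i`
needs its driver below `L_i ≤ 2k`, so at least `k` of these `2k` independent uniform drivers lie
in `{0, …, 2k-1}`: this has probability at most `C(2k, k) (2k/n)^k ≤ 4^k 8^{-k} = 2^{-k}`.
A union bound over the `n² + 1` values of `ℓ` gives `(n² + 1) 2^{-n/16} ≤ n^{-4}` for `n ≥ 2048`.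
-/

open Finset

section Prob

variable {Ω : Type*} [Fintype Ω]

lemma prob_eq_card_filter (p : Ω → Prop) [DecidablePred p] :
    prob p = #{ω | p ω} / Fintype.card Ω := by
  rw [prob, Nat.card_eq_fintype_card, Nat.card_eq_fintype_card, Fintype.card_subtype]

lemma prob_le_sum_prob {ι : Type*} (s : Finset ι) (E : ι → Ω → Prop) (p : Ω → Prop)
    (h : ∀ ω, p ω → ∃ i ∈ s, E i ω) :
    prob p ≤ ∑ i ∈ s, prob (E i) := by
  simp only [prob_eq_card_filter, ← sum_div]
  gcongr
  calc (#{ω | p ω} : ℝ) ≤ #(s.biUnion fun i => {ω | E i ω}) := by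
        gcongr
        intro ω hω
        obtain ⟨i, hi, hE⟩ := h ω (mem_filter.mp hω).2
        exact mem_biUnion.mpr ⟨i, hi, by simpa using hE⟩
    _ ≤ ∑ i ∈ s, (#{ω | E i ω} : ℝ) := mod_cast card_biUnion_le

end Prob

section Product

variable {ι α : Type*} [Fintype ι] [Fintype α] [Nonempty α]

lemma prob_forall_mem (S : Finset ι) (A : Finset α) :
    prob (fun ω : ι → α => ∀ i ∈ S, ω i ∈ A) = (#A / Fintype.card α : ℝ) ^ #S := by
  have hset : ({ω | ∀ i ∈ S, ω i ∈ A} : Finset (ι → α))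
      = Fintype.piFinset fun i => if i ∈ S then A else univ := by
    ext ω
    simp only [mem_filter, mem_univ, true_and, Fintype.mem_piFinset]
    refine ⟨fun h i => ?_, fun h i hi => by simpa [hi] using h i⟩
    split_ifs with hi
    · exact h i hi
    · exact mem_univ _
  have hcard : #S + #Sᶜ = Fintype.card ι := card_add_card_compl S
  have hprod : ∏ i, #(if i ∈ S then A else univ) = #A ^ #S * Fintype.card α ^ #Sᶜ := by
    simp only [apply_ite card, card_univ, prod_ite, prod_const, filter_not,
      filter_mem_eq_inter, univ_inter, ← compl_eq_univ_sdiff]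
  have hα : (Fintype.card α : ℝ) ≠ 0 := by positivity
  rw [prob_eq_card_filter, hset, Fintype.card_piFinset, hprod, Fintype.card_fun, ← hcard]
  push_cast
  rw [pow_add, div_pow, mul_div_mul_right _ _ (pow_ne_zero _ hα)]

lemma prob_le_choose_mul [DecidableEq α] (W : Finset ι) (A : Finset α) (k : ℕ) :
    prob (fun ω : ι → α => k ≤ #{i ∈ W | ω i ∈ A})
      ≤ (#W).choose k * (#A / Fintype.card α : ℝ) ^ k := by
  calc prob (fun ω : ι → α => k ≤ #{i ∈ W | ω i ∈ A})
      ≤ ∑ S ∈ W.powersetCard k, prob (fun ω : ι → α => ∀ i ∈ S, ω i ∈ A) := by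
        refine prob_le_sum_prob _ _ _ fun ω hω => ?_
        obtain ⟨S, hS, hcard⟩ := exists_subset_card_eq hω
        refine ⟨S, mem_powersetCard.mpr ⟨hS.trans (filter_subset _ _), hcard⟩, fun i hi => ?_⟩
        exact (mem_filter.mp (hS hi)).2
    _ = (#W).choose k * (#A / Fintype.card α : ℝ) ^ k := by
        rw [sum_congr rfl fun S hS => by rw [prob_forall_mem, (mem_powersetCard.mp hS).2],
          sum_const, card_powersetCard, nsmul_eq_mul]

lemma prob_le_inv_two_pow [DecidableEq α] (W : Finset ι) (A : Finset α) {k : ℕ}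
    (hW : #W ≤ 2 * k) (hA : 8 * #A ≤ Fintype.card α) :
    prob (fun ω : ι → α => k ≤ #{i ∈ W | ω i ∈ A}) ≤ ((2 : ℝ) ^ k)⁻¹ := by
  have hratio : (#A / Fintype.card α : ℝ) ≤ 1 / 8 := by
    rw [div_le_div_iff₀ (by positivity) (by norm_num)]
    exact_mod_cast (by omega : #A * 8 ≤ 1 * Fintype.card α)
  calc prob (fun ω : ι → α => k ≤ #{i ∈ W | ω i ∈ A})
      ≤ (#W).choose k * (#A / Fintype.card α : ℝ) ^ k := prob_le_choose_mul W A k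
    _ ≤ (2 : ℝ) ^ (2 * k) * (1 / 8) ^ k := by
        gcongr
        exact_mod_cast (Nat.choose_le_two_pow _ k).trans (Nat.pow_le_pow_right two_pos hW)
    _ = ((2 : ℝ) ^ k)⁻¹ := by
        rw [pow_mul, ← mul_pow, ← inv_pow]
        norm_num

end Product

def stepWindow (T a b : ℕ) : Finset (Fin T) := {i | a ≤ (i : ℕ) ∧ (i : ℕ) < b}

lemma card_stepWindow_le (T a b : ℕ) : #(stepWindow T a b) ≤ b - a := by
  rw [← Nat.card_Ico]
  refine card_le_card_of_injOn Fin.val (fun i hi => ?_) Fin.val_injective.injOn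
  simpa [stepWindow] using hi

section Walk

variable {n : ℕ} (ω : Fin (2 * n ^ 2) → Fin n)

lemma walk_succ_of_lt {i : ℕ} (hi : i < 2 * n ^ 2) :
    walk n ω (i + 1) =
      if (ω ⟨i, hi⟩ : ℕ) < walk n ω i then walk n ω i - 1 else walk n ω i + 1 := by
  rw [walk, dif_pos hi]

lemma walk_succ_lt_iff {i : ℕ} (hi : i < 2 * n ^ 2) :
    walk n ω (i + 1) < walk n ω i ↔ (ω ⟨i, hi⟩ : ℕ) < walk n ω i := by
  rw [walk_succ_of_lt ω hi]
  split_ifs <;> omega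

lemma walk_le_walk_add (i j : ℕ) : walk n ω i ≤ walk n ω (i + j) + j := by
  induction j with
  | zero => rfl
  | succ j ih =>
    show walk n ω i ≤ walk n ω (i + j + 1) + (j + 1)
    have : walk n ω (i + j) ≤ walk n ω (i + j + 1) + 1 := by
      rw [walk]
      split_ifs <;> omega
    omega

lemma walk_le_sub_of_walk_eq_zero {i t : ℕ} (hit : i ≤ t) (h0 : walk n ω t = 0) :
    walk n ω i ≤ t - i := by
  have := walk_le_walk_add ω i (t - i)
  rwa [Nat.add_sub_cancel' hit, h0, zero_add] at this

lemma walk_add_two_mul_card_down {a b : ℕ} (hab : a ≤ b) (hb : b ≤ 2 * n ^ 2) :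
    walk n ω b + 2 * #{j ∈ Ico a b | walk n ω (j + 1) < walk n ω j}
      = walk n ω a + (b - a) := by
  induction b, hab using Nat.le_induction with
  | base => simp
  | succ b hab ih =>
    specialize ih (by omega)
    rw [Nat.Ico_succ_right_eq_insert_Ico hab, filter_insert]
    have hb' : b < 2 * n ^ 2 := by omega
    rw [walk_succ_of_lt ω hb']
    split_ifs with hdown hlt hlt
    · rw [card_insert_of_notMem (by simp)]
      omega
    all_goals omega

end Walk

lemma le_card_small_drivers_of_walk_eq_zero {n k t : ℕ} (ω : Fin (2 * n ^ 2) → Fin n)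
    (hkt : 2 * k ≤ t) (ht : t ≤ 2 * n ^ 2) (h0 : walk n ω t = 0) :
    k ≤ #{i ∈ stepWindow (2 * n ^ 2) (t - 2 * k) t |
      ω i ∈ ({x | (x : ℕ) < 2 * k} : Finset (Fin n))} := by
  have key := walk_add_two_mul_card_down ω (Nat.sub_le t (2 * k)) ht
  set downs := {j ∈ Ico (t - 2 * k) t | walk n ω (j + 1) < walk n ω j}
  have hdowns : k ≤ #downs := by omega
  have hlt : ∀ j ∈ downs, j < 2 * n ^ 2 := fun j hj => by
    have := (mem_Ico.mp (mem_filter.mp hj).1).2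
    omega
  calc k ≤ #(downs.attachFin hlt) := by rwa [card_attachFin]
    _ ≤ _ := by
      refine card_le_card fun i hi => ?_
      obtain ⟨hwin, hdown⟩ := mem_filter.mp ((mem_attachFin hlt).mp hi)
      have hwin := mem_Ico.mp hwin
      have hsmall : (ω i : ℕ) < walk n ω i := (walk_succ_lt_iff ω i.isLt).mp hdown
      have hbound := walk_le_sub_of_walk_eq_zero ω hwin.2.le h0
      simp only [mem_filter, stepWindow, mem_univ, true_and]
      exact ⟨hwin, by omega⟩

lemma linear_le_two_pow {L : ℕ} (hL : 11 ≤ L) : 96 * L + 112 ≤ 2 ^ L := by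
  induction L, hL using Nat.le_induction with
  | base => norm_num
  | succ L hL ih =>
    have : 2 ^ 11 ≤ 2 ^ L := Nat.pow_le_pow_right two_pos hL
    rw [pow_succ]
    omega

lemma pow_four_mul_le_two_pow {n : ℕ} (hn : 2048 ≤ n) : n ^ 4 * (n ^ 2 + 1) ≤ 2 ^ (n / 16) := by
  set L := Nat.log 2 n
  have hL : 11 ≤ L := Nat.le_log_of_pow_le one_lt_two (by omega)
  have hlog : 2 ^ L ≤ n := Nat.pow_log_le_self 2 (by omega)
  have hn_lt : n < 2 ^ (L + 1) := Nat.lt_pow_succ_log_self one_lt_two n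
  have : n ^ 4 ≤ n ^ 6 := Nat.pow_le_pow_right (by omega) (by norm_num)
  calc n ^ 4 * (n ^ 2 + 1) ≤ 2 * n ^ 6 := by nlinarith
    _ ≤ 2 * (2 ^ (L + 1)) ^ 6 := by gcongr
    _ = 2 ^ (6 * L + 7) := by ring
    _ ≤ 2 ^ (n / 16) := Nat.pow_le_pow_right two_pos (by have := linear_le_two_pow hL; omega)

/-- For all sufficiently large `n`, the probability that the biased random walk
`(L_i)` on `{0,…,n}` (starting at `0`, decreasing by `1` with probability `L_{i−1}/n`
and increasing by `1` otherwise) returns to `0` at some time `2ℓ` with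
`n/4 ≤ ℓ ≤ n²` is at most `n^{−4}`. -/
theorem stmt_19 :
    ∀ᶠ n : ℕ in atTop,
      prob (fun ω : Fin (2 * n ^ 2) → Fin n =>
          ∃ ℓ : ℕ, (n : ℝ) / 4 ≤ (ℓ : ℝ) ∧ ℓ ≤ n ^ 2 ∧ walk n ω (2 * ℓ) = 0)
        ≤ ((n : ℝ) ^ 4)⁻¹ := by
  filter_upwards [eventually_ge_atTop 2048] with n hn
  have : NeZero n := ⟨by omega⟩
  set k := n / 16
  set A : Finset (Fin n) := {x | (x : ℕ) < 2 * k}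
  have hA : 8 * #A ≤ Fintype.card (Fin n) := by
    simp only [A, Fin.card_filter_val_lt, Fintype.card_fin]
    omega
  calc _ ≤ ∑ ℓ ∈ range (n ^ 2 + 1), prob (fun ω : Fin (2 * n ^ 2) → Fin n =>
          k ≤ #{i ∈ stepWindow (2 * n ^ 2) (2 * ℓ - 2 * k) (2 * ℓ) | ω i ∈ A}) := by
        refine prob_le_sum_prob _ _ _ fun ω ⟨ℓ, hℓ, hℓn, h0⟩ => ⟨ℓ, mem_range.2 (by omega), ?_⟩
        have : n ≤ 4 * ℓ := by exact_mod_cast (by linarith : (n : ℝ) ≤ 4 * ℓ)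
        exact le_card_small_drivers_of_walk_eq_zero ω (by omega) (by omega) h0
    _ ≤ ∑ ℓ ∈ range (n ^ 2 + 1), ((2 : ℝ) ^ k)⁻¹ := sum_le_sum fun ℓ _ =>
        prob_le_inv_two_pow _ A ((card_stepWindow_le _ _ _).trans (by omega)) hA
    _ = (n ^ 2 + 1 : ℕ) / (2 ^ k : ℕ) := by simp [div_eq_mul_inv]
    _ ≤ ((n : ℝ) ^ 4)⁻¹ := by
        rw [inv_eq_one_div, div_le_div_iff₀ (by positivity) (by positivity), one_mul]
        exact_mod_cast (mul_comm (n ^ 2 + 1) (n ^ 4)).trans_le (pow_four_mul_le_two_pow hn)
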